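/- Let (λ_n)_{n<ω} be a sequence of infinite ordinals whose cardinalities are strictly increasing (|λ_n| < |λ_{n+1}| for all n), and let C = Σ_{n<ω} λ_n* be the lexicographic sum over ℕ of the order duals toType(λ_n)ᵒᵈ (the copy indexed by n placed below the copy indexed by n+1). Then sib(C) ≥ max{2^ℵ₀, sup_n |λ_n|}. -/

import Mathlib

/-!
A pointwise smaller sequence `d ≤ lam` gives a subchain `Σₗ n, (d n)ᵒᵈ` of `C`, and it is a sibling
of `C` once `d` contains the initial ordinals `|lam m|.ord` at infinitely many suitable positions,
since `lam k < |lam m|.ord` for `k < m`. In the dual of an infinite initial ordinal every point has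
full cardinality below it, so the cardinalities `#(Iio x)` are isomorphism invariants that can be
read off `d`:
* keeping `|lam m|.ord` exactly for `m ∈ B` (with `B` containing the odd numbers) the set of these
  cardinalities is `{|lam m| : m ∈ B}`, which recovers `B`: this gives `2 ^ ℵ₀` siblings;
* putting an arbitrary `α < |lam n|.ord` at position `n + 1`, nothing before it and `|lam m|.ord`
  after it, the points with at most `|lam n|` predecessors form a copy of `αᵒᵈ`, which recovers
  `α`: this gives `|lam n|` siblings.
-/

universe u v

/-- `sib C` is the number of isomorphism classes of chains equimorphic to `C`,
computed as the number of order-isomorphism classes of subsets `S` of `C`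
such that `C` order-embeds into `S`. -/
def sib (C : Type u) [LinearOrder C] : Cardinal.{u} :=
  Cardinal.mk (Quot fun S T : {S : Set C // Nonempty (C ↪o ↥S)} =>
    Nonempty (↥S.1 ≃o ↥T.1))

open Cardinal Set

theorem lift_mk_le_sib {C : Type u} [LinearOrder C] {ι : Type v} (D : ι → Type u)
    [∀ i, LinearOrder (D i)] (hDC : ∀ i, Nonempty (D i ↪o C)) (hCD : ∀ i, Nonempty (C ↪o D i))
    (hD : ∀ i j, Nonempty (D i ≃o D j) → i = j) :
    lift.{u} #ι ≤ lift.{v} (sib C) := by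
  let e i : D i ↪o C := (hDC i).some
  let rangeIso i : D i ≃o range (e i) := StrictMono.orderIso _ (e i).strictMono
  let copy i : {S : Set C // Nonempty (C ↪o S)} :=
    ⟨range (e i), (hCD i).map fun g => g.trans (rangeIso i).toOrderEmbedding⟩
  have isoEquiv :
      Equivalence fun S T : {S : Set C // Nonempty (C ↪o S)} => Nonempty (S.1 ≃o T.1) :=
    ⟨fun _ => ⟨OrderIso.refl _⟩, fun ⟨f⟩ => ⟨f.symm⟩, fun ⟨f⟩ ⟨g⟩ => ⟨f.trans g⟩⟩
  refine lift_mk_le_lift_mk_of_injective (f := fun i => Quot.mk _ (copy i)) fun i j hij => hD i j ?_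
  obtain ⟨f⟩ := isoEquiv.eqvGen_iff.1 (Quot.eqvGen_exact hij)
  exact ⟨(rangeIso i).trans (f.trans (rangeIso j).symm)⟩

def OrderIso.subtypeCongr {X Y : Type*} [LE X] [LE Y] (f : X ≃o Y) {p : X → Prop} {q : Y → Prop}
    (h : ∀ x, p x ↔ q (f x)) : {x // p x} ≃o {y // q y} :=
  { f.toEquiv.subtypeEquiv h with map_rel_iff' := f.le_iff_le }

section MkIio

variable {X Y : Type u} [LinearOrder X] [LinearOrder Y]

theorem OrderIso.mk_Iio_apply (f : X ≃o Y) (x : X) : #(Iio (f x)) = #(Iio x) := by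
  rw [← f.image_Iio, mk_image_eq f.injective]

theorem OrderIso.range_mk_Iio (f : X ≃o Y) :
    range (fun y : Y => #(Iio y)) = range (fun x : X => #(Iio x)) := by
  rw [← f.surjective.range_comp]
  simp only [Function.comp_def, f.mk_Iio_apply]

end MkIio

def OrderEmbedding.sigmaLex {ι κ : Type*} [LinearOrder ι] [Preorder κ] {α : ι → Type*}
    {β : κ → Type*} [∀ i, LinearOrder (α i)] [∀ j, Preorder (β j)] (σ : ι ↪o κ)
    (f : ∀ i, α i ↪o β (σ i)) : (Σₗ i, α i) ↪o Σₗ j, β j :=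
  OrderEmbedding.ofStrictMono (fun x => toLex ⟨σ x.1, f x.1 x.2⟩) <| by
    rintro ⟨i, a⟩ ⟨j, b⟩ h
    rcases Sigma.Lex.lt_def.1 h with hij | ⟨hij, hab⟩
    · exact Sigma.Lex.lt_def.2 (Or.inl (σ.strictMono hij))
    · obtain rfl : i = j := hij
      exact Sigma.Lex.lt_def.2 (Or.inr ⟨rfl, (f i).strictMono hab⟩)

theorem Sigma.Lex.strictMono_toLex_mk {ι : Type*} [Preorder ι] {α : ι → Type*}
    [∀ i, Preorder (α i)] (i : ι) : StrictMono fun a : α i => (toLex ⟨i, a⟩ : Σₗ i, α i) :=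
  fun _ _ h => Sigma.Lex.lt_def.2 (Or.inr ⟨rfl, h⟩)

namespace Ordinal

theorem nonempty_toType_orderEmbedding {o o' : Ordinal.{u}} (h : o ≤ o') :
    Nonempty (o.ToType ↪o o'.ToType) := by
  rw [← type_toType o, ← type_toType o'] at h
  exact (type_le_iff.1 h).map InitialSeg.toOrderEmbedding

theorem eq_of_toType_orderIso {o o' : Ordinal.{u}} (f : o.ToType ≃o o'.ToType) : o = o' := by
  rw [← type_toType o, ← type_toType o']
  exact f.toRelIsoLT.ordinalType_congr

theorem IsInitial.mk_Ioi {o : Ordinal.{u}} (ho : o.IsInitial) (hω : ℵ₀ ≤ o.card)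
    (a : o.ToType) : #(Ioi a) = o.card := by
  have : Infinite o.ToType := infinite_iff.2 (by rwa [mk_toType])
  rw [← compl_Iic, mk_compl_of_infinite, mk_toType]
  exact mk_Iic_lt a (by rw [mk_toType, type_toType, ho.ord_card]) (by rwa [mk_toType])

end Ordinal

abbrev LexSumDual (d : ℕ → Ordinal.{u}) : Type u := Σₗ n, (d n).ToTypeᵒᵈ

namespace LexSumDual

variable {d e : ℕ → Ordinal.{u}}

theorem nonempty_orderEmbedding {σ : ℕ → ℕ} (hσ : StrictMono σ) (h : ∀ n, d n ≤ e (σ n)) :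
    Nonempty (LexSumDual d ↪o LexSumDual e) :=
  ⟨(OrderEmbedding.ofStrictMono σ hσ).sigmaLex fun n =>
    (Ordinal.nonempty_toType_orderEmbedding (h n)).some.dual⟩

theorem fst_ne_of_eq_zero {m : ℕ} (hm : d m = 0) (x : LexSumDual d) : x.1 ≠ m := by
  rintro rfl
  exact (Ordinal.isEmpty_toType_iff.2 hm).elim x.2

theorem fst_le_of_lt {x y : LexSumDual d} (h : y < x) : y.1 ≤ x.1 := by
  rcases Sigma.Lex.lt_def.1 h with h | ⟨h, -⟩
  exacts [h.le, h.le]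

theorem mk_Iio_le {c : Cardinal.{u}} (hc : ℵ₀ ≤ c) {x : LexSumDual d}
    (hd : ∀ j ≤ x.1, (d j).card ≤ c) : #(Iio x) ≤ c := by
  let block (j : ℕ) : Set (LexSumDual d) := range fun t : (d j).ToTypeᵒᵈ => toLex ⟨j, t⟩
  have hsub : Iio x ⊆ ⋃ j ∈ Iic x.1, block j := fun y hy =>
    mem_biUnion (fst_le_of_lt hy) ⟨y.2, rfl⟩
  have hfin : lift.{u} #(Iic x.1) ≤ c := (lift_le_aleph0.2 mk_le_aleph0).trans hc
  have hblock (j : Iic x.1) : lift.{0} #(block j) ≤ c := by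
    rw [lift_uzero]
    exact mk_range_le.trans ((mk_toType _).trans_le (hd j j.2))
  calc #(Iio x) ≤ lift.{0} #(⋃ j ∈ Iic x.1, block j) := by
        rw [lift_uzero]; exact mk_le_mk_of_subset hsub
    _ ≤ lift.{u} #(Iic x.1) * ⨆ j : Iic x.1, lift.{0} #(block j) := mk_biUnion_le_lift _ _
    _ ≤ c * c := mul_le_mul' hfin (ciSup_le' hblock)
    _ = c := mul_eq_self hc

theorem mk_Ioi_le_mk_Iio (x : LexSumDual d) : #(Ioi (OrderDual.ofDual x.2)) ≤ #(Iio x) := by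
  refine mk_le_of_injective (f := fun a => ⟨toLex ⟨x.1, OrderDual.toDual a.1⟩,
    Sigma.Lex.strictMono_toLex_mk x.1 (OrderDual.toDual_lt.2 a.2)⟩) fun a b h => ?_
  exact Subtype.ext (by simpa using congrArg Subtype.val h)

theorem card_le_mk_Iio {x : LexSumDual d} (hx : (d x.1).IsInitial) (hω : ℵ₀ ≤ (d x.1).card) :
    (d x.1).card ≤ #(Iio x) :=
  (hx.mk_Ioi hω _).symm.le.trans (mk_Ioi_le_mk_Iio x)

noncomputable def fiberOrderIso (m : ℕ) : {x : LexSumDual d | x.1 = m} ≃o (d m).ToTypeᵒᵈ :=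
  have hfiber : {x : LexSumDual d | x.1 = m} = range fun t : (d m).ToTypeᵒᵈ => toLex ⟨m, t⟩ := by
    ext x
    constructor
    · rintro rfl
      exact ⟨x.2, rfl⟩
    · rintro ⟨t, rfl⟩
      rfl
  (OrderIso.setCongr _ _ hfiber).trans (StrictMono.orderIso _
    (Sigma.Lex.strictMono_toLex_mk (α := fun n => (d n).ToTypeᵒᵈ) m)).symm

end LexSumDual

section IncreasingCard

open LexSumDual

variable {lam : ℕ → Ordinal.{u}}

theorem lt_ord_card_of_lt (hcard : ∀ n, (lam n).card < (lam (n + 1)).card) {k m : ℕ}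
    (h : k < m) : lam k < (lam m).card.ord :=
  lt_ord.2 (strictMono_nat_of_lt_succ hcard h)

theorem nonempty_orderEmbedding_of_eq_ord_card (hcard : ∀ n, (lam n).card < (lam (n + 1)).card)
    {d : ℕ → Ordinal.{u}} {σ : ℕ → ℕ} (hσ : StrictMono σ) (hlt : ∀ k, k < σ k)
    (hd : ∀ k, d (σ k) = (lam (σ k)).card.ord) : Nonempty (LexSumDual lam ↪o LexSumDual d) :=
  nonempty_orderEmbedding hσ fun k => by rw [hd k]; exact (lt_ord_card_of_lt hcard (hlt k)).le

variable (lam) in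
noncomputable def cardOrdOn (B : Set ℕ) : ℕ → Ordinal.{u} :=
  B.indicator fun m => (lam m).card.ord

theorem cardOrdOn_of_mem {B : Set ℕ} {m : ℕ} (hm : m ∈ B) :
    cardOrdOn lam B m = (lam m).card.ord :=
  indicator_of_mem hm _

theorem cardOrdOn_of_notMem {B : Set ℕ} {m : ℕ} (hm : m ∉ B) : cardOrdOn lam B m = 0 :=
  indicator_of_notMem hm _

theorem cardOrdOn_le (B : Set ℕ) (m : ℕ) : cardOrdOn lam B m ≤ lam m := by
  by_cases hm : m ∈ B <;> simp [cardOrdOn, hm, ord_card_le]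

theorem card_cardOrdOn_le (B : Set ℕ) (m : ℕ) : (cardOrdOn lam B m).card ≤ (lam m).card := by
  by_cases hm : m ∈ B <;> simp [cardOrdOn, hm]

theorem mem_and_mk_Iio_eq_of_cardOrdOn (hinf : ∀ n, Ordinal.omega0 ≤ lam n)
    (hcard : ∀ n, (lam n).card < (lam (n + 1)).card) {B : Set ℕ}
    (x : LexSumDual (cardOrdOn lam B)) : x.1 ∈ B ∧ #(Iio x) = (lam x.1).card := by
  have hB : x.1 ∈ B := by
    by_contra h
    exact fst_ne_of_eq_zero (cardOrdOn_of_notMem h) x rfl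
  have hx := cardOrdOn_of_mem (lam := lam) hB
  have hω : ℵ₀ ≤ (lam x.1).card := Ordinal.aleph0_le_card.2 (hinf _)
  refine ⟨hB, le_antisymm ?_ ?_⟩
  · exact mk_Iio_le hω fun j hj =>
      (card_cardOrdOn_le B j).trans ((strictMono_nat_of_lt_succ hcard).monotone hj)
  · have := card_le_mk_Iio (x := x) (by rw [hx]; exact Ordinal.isInitial_ord _)
      (by rwa [hx, card_ord])
    rwa [hx, card_ord] at this

theorem range_mk_Iio_cardOrdOn (hinf : ∀ n, Ordinal.omega0 ≤ lam n)
    (hcard : ∀ n, (lam n).card < (lam (n + 1)).card) (B : Set ℕ) :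
    range (fun x : LexSumDual (cardOrdOn lam B) => #(Iio x)) = (fun m => (lam m).card) '' B := by
  ext c
  constructor
  · rintro ⟨x, rfl⟩
    obtain ⟨hB, h⟩ := mem_and_mk_Iio_eq_of_cardOrdOn hinf hcard x
    exact ⟨x.1, hB, h.symm⟩
  · rintro ⟨m, hm, rfl⟩
    have : Nonempty (cardOrdOn lam B m).ToType := by
      rw [Ordinal.nonempty_toType_iff, cardOrdOn_of_mem hm, ne_eq, ord_eq_zero]
      exact (aleph0_pos.trans_le (Ordinal.aleph0_le_card.2 (hinf m))).ne'
    exact ⟨toLex ⟨m, OrderDual.toDual this.some⟩,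
      (mem_and_mk_Iio_eq_of_cardOrdOn hinf hcard _).2⟩

theorem two_pow_aleph0_le_sib (hinf : ∀ n, Ordinal.omega0 ≤ lam n)
    (hcard : ∀ n, (lam n).card < (lam (n + 1)).card) : 2 ^ ℵ₀ ≤ sib (LexSumDual lam) := by
  let B (A : Set ℕ) : Set ℕ := {m | Odd m ∨ m / 2 ∈ A}
  have hB : Function.Injective B := fun A A' h => by
    ext i
    simpa [B, Nat.odd_iff] using congrArg (2 * i ∈ ·) h
  have hκ : Function.Injective fun m => (lam m).card := (strictMono_nat_of_lt_succ hcard).injective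
  have := lift_mk_le_sib (C := LexSumDual lam) (fun A => LexSumDual (cardOrdOn lam (B A)))
    (fun A => nonempty_orderEmbedding strictMono_id (cardOrdOn_le _))
    (fun A => nonempty_orderEmbedding_of_eq_ord_card hcard (σ := fun k => 2 * k + 1)
      (fun a b h => by dsimp; omega) (fun k => by omega)
      fun k => cardOrdOn_of_mem (Or.inl (odd_two_mul_add_one k)))
    fun A A' ⟨f⟩ => hB <| image_injective.2 hκ <| by
      rw [← range_mk_Iio_cardOrdOn hinf hcard, ← range_mk_Iio_cardOrdOn hinf hcard, f.range_mk_Iio]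
  simpa using this

variable (lam) in
noncomputable def cardOrdTail (n : ℕ) (α : Ordinal.{u}) : ℕ → Ordinal.{u} :=
  Function.update (cardOrdOn lam (Ioi (n + 1))) (n + 1) α

theorem cardOrdTail_self {n : ℕ} {α : Ordinal.{u}} : cardOrdTail lam n α (n + 1) = α :=
  Function.update_self _ _ _

theorem cardOrdTail_le (hcard : ∀ n, (lam n).card < (lam (n + 1)).card) {n : ℕ}
    {α : Ordinal.{u}} (hα : α < (lam n).card.ord) (m : ℕ) : cardOrdTail lam n α m ≤ lam m := by
  rcases eq_or_ne m (n + 1) with rfl | hm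
  · rw [cardOrdTail_self]
    exact (lt_ord.2 ((lt_ord.1 hα).trans (hcard n))).le.trans (ord_card_le _)
  · rw [cardOrdTail, Function.update_of_ne hm]
    exact cardOrdOn_le _ m

theorem cardOrdTail_of_lt {n m : ℕ} {α : Ordinal.{u}} (hm : n + 1 < m) :
    cardOrdTail lam n α m = (lam m).card.ord := by
  rw [cardOrdTail, Function.update_of_ne hm.ne', cardOrdOn_of_mem (mem_Ioi.2 hm)]

theorem cardOrdTail_of_le {n m : ℕ} {α : Ordinal.{u}} (hm : m ≤ n) :
    cardOrdTail lam n α m = 0 := by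
  rw [cardOrdTail, Function.update_of_ne (by omega), cardOrdOn_of_notMem (notMem_Ioi.2 (by omega))]

theorem mk_Iio_le_iff_of_cardOrdTail (hinf : ∀ n, Ordinal.omega0 ≤ lam n)
    (hcard : ∀ n, (lam n).card < (lam (n + 1)).card) {n : ℕ} {α : Ordinal.{u}}
    (hα : α < (lam n).card.ord) (x : LexSumDual (cardOrdTail lam n α)) :
    #(Iio x) ≤ (lam n).card ↔ x.1 = n + 1 := by
  have hsmall (j : ℕ) (hj : j ≤ n + 1) : (cardOrdTail lam n α j).card ≤ (lam n).card := by
    rcases hj.eq_or_lt with rfl | hj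
    · exact cardOrdTail_self (lam := lam) ▸ (lt_ord.1 hα).le
    · rw [cardOrdTail_of_le (by omega), Ordinal.card_zero]
      exact zero_le
  rcases lt_trichotomy x.1 (n + 1) with h | h | h
  · exact absurd rfl (fst_ne_of_eq_zero (cardOrdTail_of_le (by omega)) x)
  · simp only [h, iff_true]
    exact mk_Iio_le (Ordinal.aleph0_le_card.2 (hinf n)) fun j hj => hsmall j (h ▸ hj)
  · simp only [h.ne', iff_false, not_le]
    have hx := cardOrdTail_of_lt (lam := lam) (α := α) h
    have := card_le_mk_Iio (x := x) (by rw [hx]; exact Ordinal.isInitial_ord _)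
      (by rw [hx, card_ord]; exact Ordinal.aleph0_le_card.2 (hinf _))
    rw [hx, card_ord] at this
    exact (strictMono_nat_of_lt_succ hcard (by omega : n < x.1)).trans_le this

theorem eq_of_orderIso_cardOrdTail (hinf : ∀ n, Ordinal.omega0 ≤ lam n)
    (hcard : ∀ n, (lam n).card < (lam (n + 1)).card) {n : ℕ} {α β : Ordinal.{u}}
    (hα : α < (lam n).card.ord) (hβ : β < (lam n).card.ord)
    (f : LexSumDual (cardOrdTail lam n α) ≃o LexSumDual (cardOrdTail lam n β)) : α = β := by
  have hblock := f.subtypeCongr (p := fun x => x.1 = n + 1) (q := fun y => y.1 = n + 1) fun x => by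
    rw [← mk_Iio_le_iff_of_cardOrdTail hinf hcard hα, ← mk_Iio_le_iff_of_cardOrdTail hinf hcard hβ,
      f.mk_Iio_apply]
  have := Ordinal.eq_of_toType_orderIso
    ((fiberOrderIso (n + 1)).symm.trans (hblock.trans (fiberOrderIso (n + 1)))).dual
  rwa [cardOrdTail_self, cardOrdTail_self] at this

theorem card_le_sib (hinf : ∀ n, Ordinal.omega0 ≤ lam n)
    (hcard : ∀ n, (lam n).card < (lam (n + 1)).card) (n : ℕ) :
    (lam n).card ≤ sib (LexSumDual lam) := by
  have := lift_mk_le_sib (C := LexSumDual lam) (ι := Iio (lam n).card.ord)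
    (fun α => LexSumDual (cardOrdTail lam n α))
    (fun α => nonempty_orderEmbedding strictMono_id (cardOrdTail_le hcard α.2))
    (fun α => nonempty_orderEmbedding_of_eq_ord_card hcard (σ := fun k => k + (n + 2))
      (fun a b h => by dsimp; omega) (fun k => by omega) fun k => cardOrdTail_of_lt (by omega))
    fun α β ⟨f⟩ => Subtype.ext (eq_of_orderIso_cardOrdTail hinf hcard α.2 β.2 f)
  rwa [mk_Iio_ordinal, lift_lift, lift_le, card_ord] at this

end IncreasingCard

theorem sib_ge_of_sum_of_reverse_ordinals_of_increasing_card
    (lam : ℕ → Ordinal.{u}) (hinf : ∀ n, Ordinal.omega0 ≤ lam n)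
    (hcard : ∀ n, (lam n).card < (lam (n + 1)).card) :
    max (2 ^ Cardinal.aleph0) (⨆ n, (lam n).card) ≤
      sib (Σₗ (n : ℕ), ((lam n).ToType)ᵒᵈ) :=
  max_le (two_pow_aleph0_le_sib hinf hcard) (ciSup_le fun n => card_le_sib hinf hcard n)
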